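/- Let H be a connected k-uniform hypergraph with at least one edge, maximum degree Δ, and signless Laplacian eigenpair (ρ, x). Then (ρ/Δ)·x_max ≤ x(max) ≤ k·x_max. Moreover, if H is regular then both inequalities are equalities. -/

import Mathlib

open Finset Matrix

variable {V : Type*} [Fintype V] [DecidableEq V]

/-- The incidence matrix of a hypergraph with vertex type `V` and edge set `E`:
`B(v,e) = 1` if `v ∈ e` and `0` otherwise. -/
def inc (E : Finset (Finset V)) : Matrix V ↥E ℝ :=
  fun v e => if v ∈ (e : Finset V) then 1 else 0

/-- The signless Laplacian matrix `Q = B * Bᵀ`. -/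
def signlessLap (E : Finset (Finset V)) : Matrix V V ℝ :=
  inc E * (inc E)ᵀ

/-- The degree of a vertex: the number of edges containing it. -/
def deg (E : Finset (Finset V)) (v : V) : ℕ :=
  (E.filter fun e => v ∈ e).card

/-- A hypergraph is connected if the reflexive-transitive closure of the relation
"`u ≠ v` and some edge contains both `u` and `v`" relates every pair of vertices. -/
def HConnected (E : Finset (Finset V)) : Prop :=
  ∀ u v : V, Relation.ReflTransGen (fun a b => a ≠ b ∧ ∃ e ∈ E, a ∈ e ∧ b ∈ e) u v

/-- A hypergraph is regular if all vertices have the same degree. -/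
def HRegular (E : Finset (Finset V)) : Prop :=
  ∃ r, ∀ v : V, deg E v = r

/-- A signless Laplacian eigenpair `(ρ, x)`: `x` is entrywise positive,
normalized by `∑ v, x v ^ 2 = 1`, and `Q x = ρ x`. -/
def Eigenpair (E : Finset (Finset V)) (ρ : ℝ) (x : V → ℝ) : Prop :=
  (∀ v, 0 < x v) ∧ (∑ v, x v ^ 2 = 1) ∧ (signlessLap E).mulVec x = ρ • x

/-!
Evaluating `Q x = ρ x` at a vertex `v` gives `ρ x_v = ∑_{e ∋ v} x(e)`. At a vertex where `x` is
maximal the right side is at most `Δ · x(max)`, and `x(e) ≤ k x_max` holds edge by edge.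
If `H` is `d`-regular, the same identity at a maximal and at a minimal vertex gives `ρ = d k`;
then at a maximal vertex every `x(e)` with `e ∋ v` must equal `k x_max`, so every vertex of such
an edge is maximal, and by connectivity `x` is constant.
-/

theorem HConnected.forall_of_closed {α : Type*} {E : Finset (Finset α)} (hconn : HConnected E)
    {P : α → Prop} (hP : ∀ e ∈ E, ∀ a ∈ e, ∀ b ∈ e, P a → P b) {a : α} (ha : P a) (b : α) :
    P b := by
  induction hconn a b with
  | refl => exact ha
  | tail _ hstep ih =>
    obtain ⟨-, e, he, hc, hd⟩ := hstep
    exact hP e he _ hc _ hd ih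

theorem Finset.eq_of_sum_eq_card_nsmul {ι M : Type*} [AddCommMonoid M] [PartialOrder M]
    [IsOrderedCancelAddMonoid M] {s : Finset ι} {f : ι → M} {c : M} (hle : ∀ i ∈ s, f i ≤ c)
    (hsum : ∑ i ∈ s, f i = #s • c) : ∀ i ∈ s, f i = c :=
  (sum_eq_sum_iff_of_le hle).1 (by rw [sum_const]; exact hsum)

section Uniform

variable {α : Type*} {E : Finset (Finset α)} {k : ℕ} {x : α → ℝ}

theorem sum_le_mul_of_uniform (hunif : ∀ e ∈ E, #e = k) {M : ℝ} (hle : ∀ v, x v ≤ M) :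
    ∀ e ∈ E, ∑ u ∈ e, x u ≤ k * M := fun e he =>
  (sum_le_card_nsmul _ _ _ fun u _ => hle u).trans_eq (by rw [hunif e he, nsmul_eq_mul])

theorem mul_le_sum_of_uniform (hunif : ∀ e ∈ E, #e = k) {m : ℝ} (hle : ∀ v, m ≤ x v) :
    ∀ e ∈ E, k * m ≤ ∑ u ∈ e, x u := fun e he =>
  (card_nsmul_le_sum _ _ _ fun u _ => hle u).trans_eq' (by rw [hunif e he, nsmul_eq_mul])

end Uniform

section SignlessLaplacian

variable {α : Type*} [Fintype α] [DecidableEq α] {E : Finset (Finset α)} {ρ : ℝ} {x : α → ℝ}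

theorem signlessLap_mulVec_apply (E : Finset (Finset α)) (x : α → ℝ) (v : α) :
    (signlessLap E *ᵥ x) v = ∑ e ∈ E with v ∈ e, ∑ u ∈ e, x u := by
  simp only [signlessLap, inc, mulVec, mul_apply, transpose_apply, dotProduct, sum_mul,
    ite_mul, one_mul, zero_mul]
  rw [sum_comm, sum_filter, ← sum_attach E fun e => if v ∈ e then ∑ u ∈ e, x u else 0]
  refine sum_congr rfl fun e _ => ?_
  by_cases hv : v ∈ (e : Finset α) <;> simp [hv, sum_ite_mem, inter_comm]

theorem mul_apply_eq_sum_of_signlessLap_mulVec (hQ : signlessLap E *ᵥ x = ρ • x) (v : α) :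
    ρ * x v = ∑ e ∈ E with v ∈ e, ∑ u ∈ e, x u := by
  rw [← signlessLap_mulVec_apply, hQ, Pi.smul_apply, smul_eq_mul]

theorem mul_apply_le_deg_mul (hQ : signlessLap E *ᵥ x = ρ • x) {c : ℝ}
    (hc : ∀ e ∈ E, ∑ u ∈ e, x u ≤ c) (v : α) : ρ * x v ≤ deg E v * c := by
  rw [mul_apply_eq_sum_of_signlessLap_mulVec hQ, deg, ← nsmul_eq_mul]
  exact sum_le_card_nsmul _ _ _ fun e he => hc e (mem_filter.1 he).1

theorem deg_mul_le_mul_apply (hQ : signlessLap E *ᵥ x = ρ • x) {c : ℝ}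
    (hc : ∀ e ∈ E, c ≤ ∑ u ∈ e, x u) (v : α) : deg E v * c ≤ ρ * x v := by
  rw [mul_apply_eq_sum_of_signlessLap_mulVec hQ, deg, ← nsmul_eq_mul]
  exact card_nsmul_le_sum _ _ _ fun e he => hc e (mem_filter.1 he).1

theorem sum_eq_of_mul_apply_eq_deg_mul (hQ : signlessLap E *ᵥ x = ρ • x) {c : ℝ}
    (hc : ∀ e ∈ E, ∑ u ∈ e, x u ≤ c) {v : α} (hv : ρ * x v = deg E v * c) {e : Finset α}
    (he : e ∈ E) (hve : v ∈ e) : ∑ u ∈ e, x u = c := by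
  rw [mul_apply_eq_sum_of_signlessLap_mulVec hQ, deg, ← nsmul_eq_mul] at hv
  exact eq_of_sum_eq_card_nsmul (fun e he => hc e (mem_filter.1 he).1) hv e (mem_filter.2 ⟨he, hve⟩)

theorem eigenvalue_eq_and_eq_const_of_regular {k d : ℕ} (hconn : HConnected E)
    (hunif : ∀ e ∈ E, #e = k) (hQ : signlessLap E *ᵥ x = ρ • x) (hpos : ∀ v, 0 < x v)
    (hdeg : ∀ v, deg E v = d) {M : ℝ} (hmax : IsGreatest (Set.range x) M) :
    ρ = d * k ∧ ∀ v, x v = M := by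
  obtain ⟨vM, rfl⟩ := hmax.1
  have hub : ∀ v, x v ≤ x vM := fun v => hmax.2 ⟨v, rfl⟩
  obtain ⟨vm, -, hvm⟩ := exists_min_image univ x ⟨vM, mem_univ _⟩
  have hρ_le : ρ * x vM ≤ d * k * x vM := by
    simpa only [hdeg, mul_assoc] using
      mul_apply_le_deg_mul hQ (sum_le_mul_of_uniform hunif hub) vM
  have hρ_ge : d * k * x vm ≤ ρ * x vm := by
    simpa only [hdeg, mul_assoc] using
      deg_mul_le_mul_apply hQ (mul_le_sum_of_uniform hunif fun v => hvm v (mem_univ v)) vm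
  have hρ : ρ = d * k :=
    le_antisymm (le_of_mul_le_mul_right hρ_le (hpos vM))
      (le_of_mul_le_mul_right hρ_ge (hpos vm))
  refine ⟨hρ, hconn.forall_of_closed (fun e he a ha b hb hxa => ?_) rfl⟩
  have hedge : ∑ u ∈ e, x u = k * x vM :=
    sum_eq_of_mul_apply_eq_deg_mul hQ (sum_le_mul_of_uniform hunif hub)
      (by rw [hxa, hdeg, hρ]; ring) he ha
  exact eq_of_sum_eq_card_nsmul (fun u _ => hub u) (by rw [hedge, hunif e he, nsmul_eq_mul]) b hb

end SignlessLaplacian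

theorem edge_max_bounds_general {V : Type*} [Fintype V] [DecidableEq V] (k : ℕ)
    (hk : 2 ≤ k) (E : Finset (Finset V)) (hunif : ∀ e ∈ E, e.card = k)
    (hconn : HConnected E)
    (ρ : ℝ) (x : V → ℝ) (hx : Eigenpair E ρ x)
    (Δ : ℕ) (hΔ : IsGreatest (Set.range (deg E)) Δ)
    (xmax : ℝ) (hmax : IsGreatest (Set.range x) xmax)
    (xemax : ℝ) (hemax : IsGreatest ((fun e : Finset V => ∑ v ∈ e, x v) '' ↑E) xemax) :
    (ρ / (Δ : ℝ) * xmax ≤ xemax ∧ xemax ≤ (k : ℝ) * xmax) ∧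
      (HRegular E → ρ / (Δ : ℝ) * xmax = xemax ∧ xemax = (k : ℝ) * xmax) := by
  obtain ⟨hpos, -, hQ⟩ := hx
  obtain ⟨v0, rfl⟩ := hmax.1
  have hub : ∀ v, x v ≤ x v0 := fun v => hmax.2 ⟨v, rfl⟩
  obtain ⟨e0, he0, rfl⟩ := hemax.1
  have heub : ∀ e ∈ E, ∑ u ∈ e, x u ≤ ∑ u ∈ e0, x u := fun e he => hemax.2 ⟨e, he, rfl⟩
  obtain ⟨w, hw⟩ : e0.Nonempty := card_pos.1 (by rw [hunif e0 he0]; omega)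
  have hΔ_pos : (0 : ℝ) < Δ :=
    Nat.cast_pos.2 <| (card_pos.2 ⟨e0, mem_filter.2 ⟨he0, hw⟩⟩).trans_le (hΔ.2 ⟨w, rfl⟩)
  have hlower : ρ * x v0 ≤ Δ * ∑ u ∈ e0, x u :=
    (mul_apply_le_deg_mul hQ heub v0).trans <| by
      gcongr
      · exact sum_nonneg fun u _ => (hpos u).le
      · exact hΔ.2 ⟨v0, rfl⟩
  refine ⟨⟨by rwa [div_mul_eq_mul_div, div_le_iff₀' hΔ_pos],
    sum_le_mul_of_uniform hunif hub e0 he0⟩, fun ⟨r, hr⟩ => ?_⟩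
  obtain ⟨v1, hv1⟩ := hΔ.1
  obtain ⟨hρ, hconst⟩ := eigenvalue_eq_and_eq_const_of_regular hconn hunif hQ hpos
    (fun v => (hr v).trans ((hr v1).symm.trans hv1)) hmax
  have hedge : ∑ u ∈ e0, x u = k * x v0 := by
    rw [sum_congr rfl fun u _ => hconst u, sum_const, hunif e0 he0, nsmul_eq_mul]
  beta_reduce
  rw [hedge, hρ]
  exact ⟨by field_simp, rfl⟩

/-- For a connected `k`-graph with at least one edge, maximum degree `Δ` and signless
Laplacian eigenpair `(ρ, x)`: `(ρ/Δ) x_max ≤ x(max) ≤ k x_max`; if `H` is regular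
both are equalities. -/
theorem edge_max_bounds {V : Type*} [Fintype V] [DecidableEq V] (k : ℕ)
    (hk : 2 ≤ k) (E : Finset (Finset V)) (hunif : ∀ e ∈ E, e.card = k)
    (hconn : HConnected E) (hE : E.Nonempty)
    (ρ : ℝ) (x : V → ℝ) (hx : Eigenpair E ρ x)
    (Δ : ℕ) (hΔ : IsGreatest (Set.range (deg E)) Δ)
    (xmax : ℝ) (hmax : IsGreatest (Set.range x) xmax)
    (xemax : ℝ) (hemax : IsGreatest ((fun e : Finset V => ∑ v ∈ e, x v) '' ↑E) xemax) :
    (ρ / (Δ : ℝ) * xmax ≤ xemax ∧ xemax ≤ (k : ℝ) * xmax) ∧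
      (HRegular E → ρ / (Δ : ℝ) * xmax = xemax ∧ xemax = (k : ℝ) * xmax) :=
  edge_max_bounds_general k hk E hunif hconn ρ x hx Δ hΔ xmax hmax xemax hemax
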